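/- Let (g,⟨·,·⟩) be a double extension of (g₀,⟨·,·⟩₀) by (D,K,L) with (g₀,⟨·,·⟩₀) Ricci flat and Δ = 0. Then (g,⟨·,·⟩) is Ricci-parallel. Moreover, if additionally Γ ≠ 0, then Ric ≠ 0 and Ric² = 0. -/

import Mathlib

/-- The Ricci tensor of a left-invariant metric determined by a connection `nabla`:
`ric(x,y) = tr (ξ ↦ ∇_ξ ∇_x y − ∇_x ∇_ξ y − ∇_{[ξ,x]} y)`. -/
noncomputable def ricci {g : Type*} [LieRing g] [LieAlgebra ℝ g]
    (nabla : g →ₗ[ℝ] g →ₗ[ℝ] g) (x y : g) : ℝ :=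
  LinearMap.trace ℝ g
    (nabla.flip (nabla x y) - nabla x ∘ₗ nabla.flip y +
      nabla.flip y ∘ₗ (LieAlgebra.ad ℝ g x : g →ₗ[ℝ] g))

/-- `nabla` is the Levi-Civita connection of the metric Lie algebra `(g, B)`
(Koszul formula). -/
def IsLeviCivita {g : Type*} [LieRing g] [LieAlgebra ℝ g]
    (B : g →ₗ[ℝ] g →ₗ[ℝ] ℝ) (nabla : g →ₗ[ℝ] g →ₗ[ℝ] g) : Prop :=
  ∀ x y z : g, 2 * B (nabla x y) z = B ⁅x, y⁆ z - B ⁅y, z⁆ x + B ⁅z, x⁆ y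

/-- Ricci-parallel: `(∇_x ric)(y,z) = −ric(∇_x y, z) − ric(y, ∇_x z) = 0`. -/
noncomputable def IsRicciParallel {g : Type*} [LieRing g] [LieAlgebra ℝ g]
    (nabla : g →ₗ[ℝ] g →ₗ[ℝ] g) : Prop :=
  ∀ x y z : g, ricci nabla (nabla x y) z + ricci nabla y (nabla x z) = 0

/-!
Write `g = ℝu ⊕ ι g₀ ⊕ ℝv`. Koszul's formula gives `∇v = 0`, `∇_v = 0`, shows that `∇` takes values
in `v^⊥ = ι g₀ ⊕ ℝv`, and expresses `∇` through `∇⁰`, `½(D − D* − K)` and `½(D + D* + K)`. Hence each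
endomorphism `z ↦ R(z, x) y` kills `v` and maps `u` into `v^⊥`, so its trace is that of its
`g₀ → g₀` block. Computing these blocks gives `ric(ιe, ιf) = ric₀(e, f) = 0`,
`ric(u, ιe) = ric(ιe, u) = ⟨Δ, e⟩₀ = 0` and `ric(u, u) = Γ`, so `Ric = Γ ⟨·, v⟩ v`. This is parallel
because `⟨∇_x y, v⟩ = 0`, and `Ric² = 0` because `v` is null.
-/

open LinearMap

section LinearAlgebra

variable {K V : Type*} [Field K] [AddCommGroup V] [Module K V] [FiniteDimensional K V]

theorem LinearMap.IsAdjointPair.trace_eq {B : V →ₗ[K] V →ₗ[K] K} (hB : B.SeparatingLeft)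
    {P Q : V →ₗ[K] V} (h : IsAdjointPair B B P Q) : trace K V P = trace K V Q := by
  have hB' : B.Nondegenerate := BilinForm.Nondegenerate.ofSeparatingLeft hB
  set E := BilinForm.toDual B hB'
  have hP : P = E.symm.conj (Module.Dual.transpose (R := K) Q) := by
    ext e
    refine sub_eq_zero.mp (hB _ fun f => ?_)
    simp [E, LinearEquiv.conj_apply, Module.Dual.transpose_apply, BilinForm.toDual_def, h e f]
  rw [hP, trace_conj', trace_transpose']

theorem LinearMap.IsAdjointPair.trace_comp_eq_neg {B : V →ₗ[K] V →ₗ[K] K} (hB : B.SeparatingLeft)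
    {N X Y : V →ₗ[K] V} (hN : IsSkewAdjoint B N) (h : IsAdjointPair B B Y X) :
    trace K V (N ∘ₗ Y) = -trace K V (N ∘ₗ X) := by
  rw [trace_comp_comm', ← map_neg, ← neg_comp]
  exact IsAdjointPair.trace_eq hB fun a b => by
    simp only [comp_apply, neg_apply, h (N a), hN a, Pi.neg_apply, map_neg]

theorem LinearMap.trace_eq_trace_comp_add {W : Type*} [AddCommGroup W] [Module K W] [FiniteDimensional K W]
    (T : V →ₗ[K] V) (i : W →ₗ[K] V) (p : V →ₗ[K] W) :
    trace K V T = trace K W (p ∘ₗ T ∘ₗ i) + trace K V (T - T ∘ₗ i ∘ₗ p) := by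
  rw [trace_comp_comm', comp_assoc, ← map_add, add_sub_cancel]

end LinearAlgebra

section MetricLieAlgebra

variable {𝔤 : Type*} [LieRing 𝔤] [LieAlgebra ℝ 𝔤] {B : 𝔤 →ₗ[ℝ] 𝔤 →ₗ[ℝ] ℝ}
  {nabla : 𝔤 →ₗ[ℝ] 𝔤 →ₗ[ℝ] 𝔤}

theorem IsLeviCivita.apply_eq (h : IsLeviCivita B nabla) (x y z : 𝔤) :
    B (nabla x y) z = (B ⁅x, y⁆ z - B ⁅y, z⁆ x + B ⁅z, x⁆ y) / 2 := by
  linarith [h x y z]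

theorem IsLeviCivita.isSkewAdjoint (h : IsLeviCivita B nabla) (hsymm : ∀ x y, B x y = B y x)
    (x : 𝔤) : IsSkewAdjoint B (nabla x) := fun a b => by
  have hab := h x a b
  have hba := h x b a
  rw [← lie_skew b x] at hab
  rw [← lie_skew a x, ← lie_skew b a] at hba
  simp only [map_neg, LinearMap.neg_apply] at hab hba
  simp only [Pi.neg_apply, map_neg, LinearMap.neg_apply, hsymm a]
  linarith

theorem IsLeviCivita.sub_swap (h : IsLeviCivita B nabla) (hB : B.SeparatingLeft) (x y : 𝔤) :
    nabla x y - nabla y x = ⁅x, y⁆ := by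
  refine sub_eq_zero.mp (hB _ fun z => ?_)
  have hxy := h x y z
  have hyx := h y x z
  rw [← lie_skew y x, ← lie_skew x z, ← lie_skew z y] at hyx
  simp only [map_neg, LinearMap.neg_apply] at hyx
  simp only [map_sub, LinearMap.sub_apply]
  linarith

theorem IsLeviCivita.flip_eq (h : IsLeviCivita B nabla) (hB : B.SeparatingLeft) (y : 𝔤) :
    nabla.flip y = nabla y - (LieAlgebra.ad ℝ 𝔤 y : 𝔤 →ₗ[ℝ] 𝔤) := by
  ext x
  rw [flip_apply, LinearMap.sub_apply, LieAlgebra.ad_apply, ← h.sub_swap hB y x]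
  abel

theorem IsLeviCivita.eq_smul (h : IsLeviCivita B nabla) (hB : B.SeparatingLeft)
    (hsymm : ∀ x y, B x y = B y x) {S : 𝔤 →ₗ[ℝ] 𝔤 →ₗ[ℝ] 𝔤}
    (hS : ∀ e f f', B (S e f) f' = B e ⁅f, f'⁆) (x : 𝔤) :
    nabla x = (1 / 2 : ℝ) • ((LieAlgebra.ad ℝ 𝔤 x : 𝔤 →ₗ[ℝ] 𝔤) - S.flip x - S x) := by
  ext y
  refine sub_eq_zero.mp (hB _ fun z => ?_)
  simp only [map_sub, LinearMap.sub_apply, LinearMap.smul_apply, map_smul, flip_apply,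
    LieAlgebra.ad_apply, smul_eq_mul, hS, h.apply_eq]
  rw [hsymm y, hsymm x, ← lie_skew z x, map_neg, LinearMap.neg_apply]
  ring

variable [FiniteDimensional ℝ 𝔤]

theorem IsLeviCivita.trace_flip (h : IsLeviCivita B nabla) (hB : B.SeparatingLeft)
    (hsymm : ∀ x y, B x y = B y x) (y : 𝔤) :
    trace ℝ 𝔤 (nabla.flip y) = -trace ℝ 𝔤 (LieAlgebra.ad ℝ 𝔤 y : 𝔤 →ₗ[ℝ] 𝔤) := by
  have hskew : trace ℝ 𝔤 (nabla y) = -trace ℝ 𝔤 (nabla y) := by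
    rw [← map_neg]
    exact IsAdjointPair.trace_eq hB (h.isSkewAdjoint hsymm y)
  rw [h.flip_eq hB, map_sub]
  linarith

theorem IsLeviCivita.trace_comp_of_isSkewAdjoint (h : IsLeviCivita B nabla)
    (hB : B.SeparatingLeft) (hsymm : ∀ x y, B x y = B y x) {S : 𝔤 →ₗ[ℝ] 𝔤 →ₗ[ℝ] 𝔤}
    (hS : ∀ e f f', B (S e f) f' = B e ⁅f, f'⁆) {K : 𝔤 →ₗ[ℝ] 𝔤} (hK : IsSkewAdjoint B K)
    (x : 𝔤) :
    trace ℝ 𝔤 (nabla x ∘ₗ K)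
      = trace ℝ 𝔤 (K ∘ₗ (LieAlgebra.ad ℝ 𝔤 x : 𝔤 →ₗ[ℝ] 𝔤)) - (1 / 2) * trace ℝ 𝔤 (K ∘ₗ S x) := by
  have hflip : trace ℝ 𝔤 (K ∘ₗ S.flip x) = -trace ℝ 𝔤 (K ∘ₗ (LieAlgebra.ad ℝ 𝔤 x : 𝔤 →ₗ[ℝ] 𝔤)) :=
    IsAdjointPair.trace_comp_eq_neg hB hK fun a b => by
      rw [flip_apply, hS, LieAlgebra.ad_apply]
  rw [h.eq_smul hB hsymm hS, smul_comp, sub_comp, sub_comp, map_smul, map_sub, map_sub,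
    trace_comp_comm' K, trace_comp_comm' K, trace_comp_comm' K, hflip, smul_eq_mul]
  ring

theorem trace_ad_apply_eq_zero {D : 𝔤 →ₗ[ℝ] 𝔤} (hD : ∀ e f, D ⁅e, f⁆ = ⁅D e, f⁆ + ⁅e, D f⁆)
    (f : 𝔤) : trace ℝ 𝔤 (LieAlgebra.ad ℝ 𝔤 (D f) : 𝔤 →ₗ[ℝ] 𝔤) = 0 := by
  have hcomm : (LieAlgebra.ad ℝ 𝔤 (D f) : 𝔤 →ₗ[ℝ] 𝔤)
      = D ∘ₗ (LieAlgebra.ad ℝ 𝔤 f : 𝔤 →ₗ[ℝ] 𝔤) - (LieAlgebra.ad ℝ 𝔤 f : 𝔤 →ₗ[ℝ] 𝔤) ∘ₗ D := by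
    ext x
    simp only [LieAlgebra.ad_apply, LinearMap.sub_apply, comp_apply, hD]
    abel
  rw [hcomm, map_sub, trace_comp_comm', sub_self]

end MetricLieAlgebra

section Ricci

variable {𝔤 : Type*} [LieRing 𝔤] [LieAlgebra ℝ 𝔤] (nabla : 𝔤 →ₗ[ℝ] 𝔤 →ₗ[ℝ] 𝔤)

-- `ricciEndo nabla x y z = R(z, x) y`.
noncomputable def ricciEndo (x y : 𝔤) : 𝔤 →ₗ[ℝ] 𝔤 :=
  nabla.flip (nabla x y) - nabla x ∘ₗ nabla.flip y +
    nabla.flip y ∘ₗ (LieAlgebra.ad ℝ 𝔤 x : 𝔤 →ₗ[ℝ] 𝔤)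

theorem ricci_eq_trace (x y : 𝔤) : ricci nabla x y = trace ℝ 𝔤 (ricciEndo nabla x y) := rfl

@[simp]
theorem ricciEndo_apply (x y z : 𝔤) :
    ricciEndo nabla x y z = nabla z (nabla x y) - nabla x (nabla z y) + nabla ⁅x, z⁆ y := by
  simp [ricciEndo]

theorem ricci_add_left (x x' y : 𝔤) :
    ricci nabla (x + x') y = ricci nabla x y + ricci nabla x' y := by
  simp only [ricci_eq_trace, ← map_add]
  congr 1
  ext z
  simp only [ricciEndo_apply, LinearMap.add_apply, map_add, add_lie]
  abel

theorem ricci_smul_left (c : ℝ) (x y : 𝔤) : ricci nabla (c • x) y = c * ricci nabla x y := by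
  simp only [ricci_eq_trace, ← smul_eq_mul, ← map_smul]
  congr 1
  ext z
  simp only [ricciEndo_apply, LinearMap.smul_apply, map_smul, smul_lie]
  module

theorem ricci_add_right (x y y' : 𝔤) :
    ricci nabla x (y + y') = ricci nabla x y + ricci nabla x y' := by
  simp only [ricci_eq_trace, ← map_add]
  congr 1
  ext z
  simp only [ricciEndo_apply, LinearMap.add_apply, map_add]
  abel

theorem ricci_smul_right (c : ℝ) (x y : 𝔤) : ricci nabla x (c • y) = c * ricci nabla x y := by
  simp only [ricci_eq_trace, ← smul_eq_mul, ← map_smul]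
  congr 1
  ext z
  simp only [ricciEndo_apply, LinearMap.smul_apply, map_smul]
  module

theorem isRicciParallel_of_ricci_eq {B : 𝔤 →ₗ[ℝ] 𝔤 →ₗ[ℝ] ℝ} {v : 𝔤} {c : ℝ}
    (hric : ∀ x y, ricci nabla x y = c * B x v * B y v) (hv : ∀ x y, B (nabla x y) v = 0) :
    IsRicciParallel nabla := fun x y z => by
  simp [hric, hv]

theorem eq_smul_of_ricci_eq {B : 𝔤 →ₗ[ℝ] 𝔤 →ₗ[ℝ] ℝ} (hB : B.SeparatingLeft)
    (hsymm : ∀ x y, B x y = B y x) {Ric : 𝔤 →ₗ[ℝ] 𝔤} (hRic : ∀ x y, B (Ric x) y = ricci nabla x y)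
    {v : 𝔤} {c : ℝ} (hric : ∀ x y, ricci nabla x y = c * B x v * B y v) (x : 𝔤) :
    Ric x = (c * B x v) • v :=
  sub_eq_zero.mp (hB _ fun y => by simp [hRic, hric, hsymm v])

end Ricci

section DoubleExtensionBlocks

-- Traces of the `g₀ → g₀` blocks of the endomorphisms `ricciEndo` of a double extension.

variable {g₀ : Type*} [LieRing g₀] [LieAlgebra ℝ g₀] [FiniteDimensional ℝ g₀]
  {B₀ : g₀ →ₗ[ℝ] g₀ →ₗ[ℝ] ℝ} {nabla₀ : g₀ →ₗ[ℝ] g₀ →ₗ[ℝ] g₀} {D Dstar K : g₀ →ₗ[ℝ] g₀}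
  {Z₀ : g₀}

theorem trace_block_u_u (hB₀ : B₀.SeparatingLeft) (hsymm₀ : ∀ e f, B₀ e f = B₀ f e)
    (hLC₀ : IsLeviCivita B₀ nabla₀) (hDstar : IsAdjointPair B₀ B₀ Dstar D)
    (hK : IsSkewAdjoint B₀ K)
    (hZ : ∀ f, B₀ Z₀ f = trace ℝ g₀ (LieAlgebra.ad ℝ g₀ f : g₀ →ₗ[ℝ] g₀)) (L : g₀) :
    trace ℝ g₀ (-nabla₀.flip L
      + ((1 / 2 : ℝ) • (D - Dstar - K)) ∘ₗ ((1 / 2 : ℝ) • (D + Dstar + K))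
      - ((1 / 2 : ℝ) • (D + Dstar + K)) ∘ₗ D)
      = -(1 / 2) * trace ℝ g₀ (D ∘ₗ D) - (1 / 2) * trace ℝ g₀ (Dstar ∘ₗ D)
        - (1 / 4) * trace ℝ g₀ (K ∘ₗ K) + B₀ L Z₀ := by
  have hDD : trace ℝ g₀ (Dstar ∘ₗ Dstar) = trace ℝ g₀ (D ∘ₗ D) :=
    IsAdjointPair.trace_eq hB₀ (hDstar.mul hDstar)
  have hKD : trace ℝ g₀ (K ∘ₗ Dstar) = -trace ℝ g₀ (K ∘ₗ D) :=
    IsAdjointPair.trace_comp_eq_neg hB₀ hK hDstar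
  have hflip : trace ℝ g₀ (nabla₀.flip L) = -B₀ L Z₀ := by
    rw [hLC₀.trace_flip hB₀ hsymm₀, ← hZ, hsymm₀]
  simp only [map_add, map_sub, map_neg, add_comp, sub_comp, comp_add, smul_comp, comp_smul,
    map_smul, smul_eq_mul, hflip]
  rw [trace_comp_comm' Dstar D, trace_comp_comm' K D, trace_comp_comm' K Dstar, hDD, hKD]
  ring

theorem trace_block_u_ι (hB₀ : B₀.SeparatingLeft) (hsymm₀ : ∀ e f, B₀ e f = B₀ f e)
    (hLC₀ : IsLeviCivita B₀ nabla₀) (hD : ∀ e f : g₀, D ⁅e, f⁆ = ⁅D e, f⁆ + ⁅e, D f⁆)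
    (hDstar : IsAdjointPair B₀ B₀ Dstar D) (hK : IsSkewAdjoint B₀ K)
    {S : g₀ →ₗ[ℝ] g₀ →ₗ[ℝ] g₀} (hS : ∀ e f f' : g₀, B₀ (S e f) f' = B₀ e ⁅f, f'⁆)
    (hZ : ∀ f, B₀ Z₀ f = trace ℝ g₀ (LieAlgebra.ad ℝ g₀ f : g₀ →ₗ[ℝ] g₀)) (f : g₀) :
    trace ℝ g₀ (nabla₀.flip ((1 / 2 : ℝ) • (D - Dstar - K) f)
      - ((1 / 2 : ℝ) • (D - Dstar - K)) ∘ₗ nabla₀.flip f + nabla₀.flip f ∘ₗ D)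
      = -(1 / 2) * trace ℝ g₀ ((D + Dstar) ∘ₗ (LieAlgebra.ad ℝ g₀ f : g₀ →ₗ[ℝ] g₀))
        + (1 / 2) * B₀ ((D - K) Z₀) f - (1 / 4) * trace ℝ g₀ (K ∘ₗ S f) := by
  have hZD : B₀ Z₀ (D f) = 0 := by rw [hZ, trace_ad_apply_eq_zero hD]
  have hZDstar : B₀ Z₀ (Dstar f) = B₀ (D Z₀) f := by rw [hsymm₀, hDstar, hsymm₀]
  have hZK : B₀ Z₀ (K f) = -B₀ (K Z₀) f := by simp [hK Z₀ f]
  have hflip : trace ℝ g₀ (nabla₀.flip ((1 / 2 : ℝ) • (D - Dstar - K) f))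
      = -B₀ Z₀ ((1 / 2 : ℝ) • (D - Dstar - K) f) := by
    rw [hLC₀.trace_flip hB₀ hsymm₀, ← hZ]
  have hDstar' := IsAdjointPair.trace_comp_eq_neg hB₀ (hLC₀.isSkewAdjoint hsymm₀ f) hDstar
  have hK' := hLC₀.trace_comp_of_isSkewAdjoint hB₀ hsymm₀ hS hK f
  rw [map_add, map_sub, hflip, hLC₀.flip_eq hB₀ f]
  simp only [map_add, map_sub, map_smul, smul_eq_mul, add_comp, sub_comp, comp_sub, smul_comp,
    LinearMap.sub_apply, hZD, hZDstar, hZK]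
  rw [trace_comp_comm' (nabla₀ f) D, trace_comp_comm' (nabla₀ f) Dstar,
    trace_comp_comm' (nabla₀ f) K, trace_comp_comm' D (LieAlgebra.ad ℝ g₀ f : g₀ →ₗ[ℝ] g₀),
    hDstar', hK']
  ring

theorem trace_block_ι_u (hB₀ : B₀.SeparatingLeft) (hsymm₀ : ∀ e f, B₀ e f = B₀ f e)
    (hLC₀ : IsLeviCivita B₀ nabla₀) (hD : ∀ e f : g₀, D ⁅e, f⁆ = ⁅D e, f⁆ + ⁅e, D f⁆)
    (hDstar : IsAdjointPair B₀ B₀ Dstar D) (hK : IsSkewAdjoint B₀ K)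
    {S : g₀ →ₗ[ℝ] g₀ →ₗ[ℝ] g₀} (hS : ∀ e f f' : g₀, B₀ (S e f) f' = B₀ e ⁅f, f'⁆)
    (hZ : ∀ f, B₀ Z₀ f = trace ℝ g₀ (LieAlgebra.ad ℝ g₀ f : g₀ →ₗ[ℝ] g₀)) (e : g₀) :
    trace ℝ g₀ (-nabla₀.flip ((1 / 2 : ℝ) • (D + Dstar + K) e)
      + nabla₀ e ∘ₗ ((1 / 2 : ℝ) • (D + Dstar + K))
      - ((1 / 2 : ℝ) • (D + Dstar + K)) ∘ₗ (LieAlgebra.ad ℝ g₀ e : g₀ →ₗ[ℝ] g₀))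
      = -(1 / 2) * trace ℝ g₀ ((D + Dstar) ∘ₗ (LieAlgebra.ad ℝ g₀ e : g₀ →ₗ[ℝ] g₀))
        + (1 / 2) * B₀ ((D - K) Z₀) e - (1 / 4) * trace ℝ g₀ (K ∘ₗ S e) := by
  have hZD : B₀ Z₀ (D e) = 0 := by rw [hZ, trace_ad_apply_eq_zero hD]
  have hZDstar : B₀ Z₀ (Dstar e) = B₀ (D Z₀) e := by rw [hsymm₀, hDstar, hsymm₀]
  have hZK : B₀ Z₀ (K e) = -B₀ (K Z₀) e := by simp [hK Z₀ e]
  have hflip : trace ℝ g₀ (nabla₀.flip ((1 / 2 : ℝ) • (D + Dstar + K) e))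
      = -B₀ Z₀ ((1 / 2 : ℝ) • (D + Dstar + K) e) := by
    rw [hLC₀.trace_flip hB₀ hsymm₀, ← hZ]
  have hDstar' := IsAdjointPair.trace_comp_eq_neg hB₀ (hLC₀.isSkewAdjoint hsymm₀ e) hDstar
  have hK' := hLC₀.trace_comp_of_isSkewAdjoint hB₀ hsymm₀ hS hK e
  rw [map_sub, map_add, map_neg, hflip]
  simp only [map_add, map_sub, map_smul, smul_eq_mul, add_comp, comp_add, comp_smul,
    smul_comp, LinearMap.add_apply, LinearMap.sub_apply, hZD, hZDstar, hZK, hDstar', hK']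
  ring

end DoubleExtensionBlocks

structure IsDoubleExtension {g₀ g : Type*} [LieRing g₀] [LieAlgebra ℝ g₀] [LieRing g]
    [LieAlgebra ℝ g] (B₀ : g₀ →ₗ[ℝ] g₀ →ₗ[ℝ] ℝ) (D K : g₀ →ₗ[ℝ] g₀) (L : g₀)
    (B : g →ₗ[ℝ] g →ₗ[ℝ] ℝ) (u v : g) (ι : g₀ →ₗ[ℝ] g) : Prop where
  exists_eq : ∀ w : g, ∃ (a b : ℝ) (e : g₀), w = a • u + b • v + ι e
  lie_u_ι : ∀ e : g₀, ⁅u, ι e⁆ = ι (D e) + B₀ L e • v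
  lie_ι_ι : ∀ e f : g₀, ⁅ι e, ι f⁆ = ι ⁅e, f⁆ + B₀ (K e) f • v
  lie_v : ∀ x : g, ⁅x, v⁆ = 0
  form_apply : ∀ (a b a' b' : ℝ) (e e' : g₀),
    B (a • u + b • v + ι e) (a' • u + b' • v + ι e') = a * b' + a' * b + B₀ e e'

namespace IsDoubleExtension

variable {g₀ g : Type*} [LieRing g₀] [LieAlgebra ℝ g₀] [LieRing g] [LieAlgebra ℝ g]
  {B₀ : g₀ →ₗ[ℝ] g₀ →ₗ[ℝ] ℝ} {D K : g₀ →ₗ[ℝ] g₀} {L : g₀} {B : g →ₗ[ℝ] g →ₗ[ℝ] ℝ} {u v : g}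
  {Dstar : g₀ →ₗ[ℝ] g₀} {ι : g₀ →ₗ[ℝ] g} {nabla₀ : g₀ →ₗ[ℝ] g₀ →ₗ[ℝ] g₀}
  {nabla : g →ₗ[ℝ] g →ₗ[ℝ] g}

theorem form_u_u (hg : IsDoubleExtension B₀ D K L B u v ι) : B u u = 0 := by
  simpa using hg.form_apply 1 0 1 0 0 0

theorem form_u_v (hg : IsDoubleExtension B₀ D K L B u v ι) : B u v = 1 := by
  simpa using hg.form_apply 1 0 0 1 0 0

theorem form_v_u (hg : IsDoubleExtension B₀ D K L B u v ι) : B v u = 1 := by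
  simpa using hg.form_apply 0 1 1 0 0 0

theorem form_v_v (hg : IsDoubleExtension B₀ D K L B u v ι) : B v v = 0 := by
  simpa using hg.form_apply 0 1 0 1 0 0

theorem form_u_ι (hg : IsDoubleExtension B₀ D K L B u v ι) (e : g₀) :
    B u (ι e) = 0 := by
  simpa using hg.form_apply 1 0 0 0 0 e

theorem form_ι_u (hg : IsDoubleExtension B₀ D K L B u v ι) (e : g₀) :
    B (ι e) u = 0 := by
  simpa using hg.form_apply 0 0 1 0 e 0

theorem form_v_ι (hg : IsDoubleExtension B₀ D K L B u v ι) (e : g₀) :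
    B v (ι e) = 0 := by
  simpa using hg.form_apply 0 1 0 0 0 e

theorem form_ι_v (hg : IsDoubleExtension B₀ D K L B u v ι) (e : g₀) :
    B (ι e) v = 0 := by
  simpa using hg.form_apply 0 0 0 1 e 0

theorem form_ι_ι (hg : IsDoubleExtension B₀ D K L B u v ι) (e f : g₀) :
    B (ι e) (ι f) = B₀ e f := by
  simpa using hg.form_apply 0 0 0 0 e f

theorem form_comm (hg : IsDoubleExtension B₀ D K L B u v ι) (hsymm₀ : ∀ e f, B₀ e f = B₀ f e)
    (x y : g) : B x y = B y x := by
  obtain ⟨a, b, e, rfl⟩ := hg.exists_eq x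
  obtain ⟨a', b', e', rfl⟩ := hg.exists_eq y
  rw [hg.form_apply, hg.form_apply, hsymm₀]
  ring

theorem lie_v_left (hg : IsDoubleExtension B₀ D K L B u v ι) (x : g) : ⁅v, x⁆ = 0 := by
  rw [← lie_skew, hg.lie_v, neg_zero]

theorem form_lie_v (hg : IsDoubleExtension B₀ D K L B u v ι) (x y : g) : B ⁅x, y⁆ v = 0 := by
  obtain ⟨a, b, e, rfl⟩ := hg.exists_eq x
  obtain ⟨a', b', e', rfl⟩ := hg.exists_eq y
  simp [hg.lie_v, hg.lie_v_left, hg.lie_u_ι, hg.lie_ι_ι, ← lie_skew (ι _) u, hg.form_ι_v,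
    hg.form_v_v]

theorem separatingLeft (hg : IsDoubleExtension B₀ D K L B u v ι) (hB₀ : B₀.SeparatingLeft) :
    B.SeparatingLeft := by
  intro w hw
  obtain ⟨a, b, e, rfl⟩ := hg.exists_eq w
  have ha : a = 0 := by simpa [hg.form_u_v, hg.form_v_v, hg.form_ι_v] using hw v
  have hb : b = 0 := by simpa [hg.form_u_u, hg.form_v_u, hg.form_ι_u] using hw u
  have he : e = 0 := hB₀ e fun f => by
    simpa [hg.form_u_ι, hg.form_v_ι, hg.form_ι_ι] using hw (ι f)
  simp [ha, hb, he]

theorem ext (hg : IsDoubleExtension B₀ D K L B u v ι) (hB₀ : B₀.SeparatingLeft) {x y : g}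
    (hu : B x u = B y u) (hv : B x v = B y v) (hι : ∀ e, B x (ι e) = B y (ι e)) : x = y := by
  refine sub_eq_zero.mp (hg.separatingLeft hB₀ _ fun z => ?_)
  obtain ⟨a, b, e, rfl⟩ := hg.exists_eq z
  simp only [map_add, map_smul, map_sub, LinearMap.sub_apply, hu, hv, hι, sub_self, smul_zero,
    add_zero]

theorem form_nabla_v (hg : IsDoubleExtension B₀ D K L B u v ι) (hLC : IsLeviCivita B nabla)
    (x y : g) : B (nabla x y) v = 0 := by
  simp [hLC.apply_eq, hg.form_lie_v, hg.lie_v, hg.lie_v_left]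

theorem nabla_v_left (hg : IsDoubleExtension B₀ D K L B u v ι) (hB₀ : B₀.SeparatingLeft)
    (hLC : IsLeviCivita B nabla) (y : g) : nabla v y = 0 :=
  hg.separatingLeft hB₀ _ fun z => by
    simp [hLC.apply_eq, hg.form_lie_v, hg.lie_v, hg.lie_v_left]

theorem nabla_v_right (hg : IsDoubleExtension B₀ D K L B u v ι) (hB₀ : B₀.SeparatingLeft)
    (hLC : IsLeviCivita B nabla) (x : g) : nabla x v = 0 :=
  hg.separatingLeft hB₀ _ fun z => by
    simp [hLC.apply_eq, hg.form_lie_v, hg.lie_v, hg.lie_v_left]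

theorem nabla_u_u (hg : IsDoubleExtension B₀ D K L B u v ι) (hB₀ : B₀.SeparatingLeft)
    (hLC : IsLeviCivita B nabla) : nabla u u = -ι L := by
  refine hg.ext hB₀ ?_ (by simp [hg.form_nabla_v hLC, hg.form_ι_v]) fun e => ?_
  · simp [hLC.apply_eq, hg.form_ι_u]
  · simp [hLC.apply_eq, hg.lie_u_ι, ← lie_skew (ι e) u, hg.form_ι_u, hg.form_v_u, hg.form_ι_ι]

theorem nabla_u_ι (hg : IsDoubleExtension B₀ D K L B u v ι) (hB₀ : B₀.SeparatingLeft)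
    (hsymm₀ : ∀ e f, B₀ e f = B₀ f e)
    (hDstar : IsAdjointPair B₀ B₀ Dstar D) (hLC : IsLeviCivita B nabla) (f : g₀) :
    nabla u (ι f) = ι ((1 / 2 : ℝ) • (D - Dstar - K) f) + B₀ L f • v := by
  refine hg.ext hB₀ ?_ ?_ fun h => ?_
  · simp [hLC.apply_eq, hg.lie_u_ι, ← lie_skew (ι f) u, hg.form_ι_u, hg.form_v_u]
  · simp [hg.form_nabla_v hLC, hg.form_ι_v, hg.form_v_v]
  · simp only [hLC.apply_eq, hg.lie_u_ι, map_add, map_smul, LinearMap.add_apply, hg.form_ι_ι,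
      LinearMap.smul_apply, hg.form_v_ι, smul_eq_mul, mul_zero, add_zero, hg.lie_ι_ι, hg.form_ι_u,
      hg.form_v_u, mul_one, zero_add, ← lie_skew (ι h) u, neg_add_rev, map_neg, LinearMap.neg_apply,
      neg_zero, one_div, LinearMap.sub_apply, map_sub, hDstar f h, hsymm₀ f (D h)]
    ring

theorem nabla_ι_u (hg : IsDoubleExtension B₀ D K L B u v ι) (hB₀ : B₀.SeparatingLeft)
    (hsymm₀ : ∀ e f, B₀ e f = B₀ f e)
    (hDstar : IsAdjointPair B₀ B₀ Dstar D) (hK : IsSkewAdjoint B₀ K)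
    (hLC : IsLeviCivita B nabla) (e : g₀) :
    nabla (ι e) u = -ι ((1 / 2 : ℝ) • (D + Dstar + K) e) := by
  refine hg.ext hB₀ ?_ (by simp [hg.form_nabla_v hLC, hg.form_ι_v]) fun h => ?_
  · simp [hLC.apply_eq, hg.lie_u_ι, ← lie_skew (ι e) u, hg.form_ι_u, hg.form_v_u]
  · simp only [hLC.apply_eq, ← lie_skew (ι e) u, hg.lie_u_ι, neg_add_rev, map_add, map_neg,
      map_smul, LinearMap.add_apply, LinearMap.neg_apply, LinearMap.smul_apply, hg.form_v_ι,
      smul_eq_mul, mul_zero, neg_zero, hg.form_ι_ι, zero_add, add_zero, hg.lie_ι_ι, hg.form_ι_u,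
      hg.form_v_u, mul_one, one_div, smul_add, hK e h, Pi.neg_apply, hsymm₀ e (K h), mul_neg,
      neg_neg, hDstar e h, hsymm₀ e (D h)]
    ring

theorem nabla_ι_ι (hg : IsDoubleExtension B₀ D K L B u v ι) (hB₀ : B₀.SeparatingLeft)
    (hsymm₀ : ∀ e f, B₀ e f = B₀ f e)
    (hDstar : IsAdjointPair B₀ B₀ Dstar D)
    (hLC₀ : IsLeviCivita B₀ nabla₀) (hLC : IsLeviCivita B nabla) (e f : g₀) :
    nabla (ι e) (ι f) = ι (nabla₀ e f) + B₀ ((1 / 2 : ℝ) • (D + Dstar + K) e) f • v := by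
  refine hg.ext hB₀ ?_ ?_ fun h => ?_
  · simp only [hLC.apply_eq, hg.lie_ι_ι, map_add, map_smul, LinearMap.add_apply, hg.form_ι_u,
      LinearMap.smul_apply, hg.form_v_u, smul_eq_mul, mul_one, zero_add, ← lie_skew (ι f) u,
      hg.lie_u_ι, neg_add_rev, map_neg, LinearMap.neg_apply, hg.form_v_ι, mul_zero, neg_zero,
      hg.form_ι_ι, sub_neg_eq_add, add_zero, one_div, smul_add, hDstar e f, hsymm₀ e (D f)]
    ring
  · simp [hg.form_nabla_v hLC, hg.form_ι_v, hg.form_v_v]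
  · simp [hLC.apply_eq, hLC₀.apply_eq, hg.lie_ι_ι, hg.form_ι_ι, hg.form_v_ι]

theorem ricciEndo_apply_v (hg : IsDoubleExtension B₀ D K L B u v ι) (hB₀ : B₀.SeparatingLeft)
    (hLC : IsLeviCivita B nabla) (x y : g) : ricciEndo nabla x y v = 0 := by
  simp [hg.nabla_v_left hB₀ hLC, hg.lie_v]

theorem form_ricciEndo_v (hg : IsDoubleExtension B₀ D K L B u v ι) (hLC : IsLeviCivita B nabla)
    (x y z : g) : B (ricciEndo nabla x y z) v = 0 := by
  simp [hg.form_nabla_v hLC]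

theorem ricci_v_left (hg : IsDoubleExtension B₀ D K L B u v ι) (hB₀ : B₀.SeparatingLeft)
    (hLC : IsLeviCivita B nabla) (y : g) : ricci nabla v y = 0 := by
  have h : ricciEndo nabla v y = 0 := by
    ext z
    simp [hg.nabla_v_left hB₀ hLC, hg.lie_v_left]
  rw [ricci_eq_trace, h, map_zero]

theorem ricci_v_right (hg : IsDoubleExtension B₀ D K L B u v ι) (hB₀ : B₀.SeparatingLeft)
    (hLC : IsLeviCivita B nabla) (x : g) : ricci nabla x v = 0 := by
  have h : ricciEndo nabla x v = 0 := by
    ext z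
    simp [hg.nabla_v_right hB₀ hLC]
  rw [ricci_eq_trace, h, map_zero]

theorem trace_eq_of_form (hg : IsDoubleExtension B₀ D K L B u v ι) (hB₀ : B₀.SeparatingLeft)
    [FiniteDimensional ℝ g₀] [FiniteDimensional ℝ g] {T : g →ₗ[ℝ] g} {P : g₀ →ₗ[ℝ] g₀}
    (hv : T v = 0) (hu : B (T u) v = 0) (hP : ∀ e f, B (T (ι e)) (ι f) = B₀ (P e) f) :
    trace ℝ g T = trace ℝ g₀ P := by
  -- `π` is the `g₀`-component, so `T - T ∘ ι ∘ π` has rank two and trace `⟨T u, v⟩ + ⟨T v, u⟩`.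
  set π : g →ₗ[ℝ] g₀ := (BilinForm.toDual B₀ (BilinForm.Nondegenerate.ofSeparatingLeft hB₀)).symm
    ∘ₗ B.compl₂ ι
  have hπ (w : g) (f : g₀) : B₀ (π w) f = B w (ι f) := by simp [π]
  have hπι : π ∘ₗ T ∘ₗ ι = P := by
    ext e
    refine sub_eq_zero.mp (hB₀ _ fun f => ?_)
    simp [hπ, hP]
  have hdecomp (w : g) : w - ι (π w) = B w v • u + B w u • v :=
    hg.ext hB₀ (by simp [hg.form_ι_u, hg.form_u_u, hg.form_v_u])
      (by simp [hg.form_ι_v, hg.form_u_v, hg.form_v_v]) fun e => by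
        simp [hg.form_ι_ι, hg.form_u_ι, hg.form_v_ι, hπ]
  have hrest : T - T ∘ₗ ι ∘ₗ π = (B.flip v).smulRight (T u) + (B.flip u).smulRight (T v) := by
    ext w
    simp [← map_sub, hdecomp]
  rw [trace_eq_trace_comp_add T ι π, hπι, hrest, map_add, trace_smulRight, trace_smulRight]
  simp [hu, hv]

theorem ricci_eq_mul (hg : IsDoubleExtension B₀ D K L B u v ι) (hB₀ : B₀.SeparatingLeft)
    (hLC : IsLeviCivita B nabla) (hι_ι : ∀ e f, ricci nabla (ι e) (ι f) = 0)
    (hu_ι : ∀ f, ricci nabla u (ι f) = 0) (hι_u : ∀ e, ricci nabla (ι e) u = 0) (x y : g) :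
    ricci nabla x y = ricci nabla u u * B x v * B y v := by
  obtain ⟨a, b, e, rfl⟩ := hg.exists_eq x
  obtain ⟨a', b', e', rfl⟩ := hg.exists_eq y
  simp only [ricci_add_right, ricci_smul_right, ricci_add_left, ricci_smul_left,
    hg.ricci_v_left hB₀ hLC, mul_zero, add_zero, hι_u, hg.ricci_v_right hB₀ hLC, hu_ι, hι_ι,
    map_add, map_smul, LinearMap.add_apply, LinearMap.smul_apply, hg.form_u_v, smul_eq_mul, mul_one,
    hg.form_v_v, hg.form_ι_v]
  ring

theorem ricci_u_u_eq_trace (hg : IsDoubleExtension B₀ D K L B u v ι) (hB₀ : B₀.SeparatingLeft)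
    [FiniteDimensional ℝ g₀] [FiniteDimensional ℝ g]
    (hsymm₀ : ∀ e f, B₀ e f = B₀ f e) (hDstar : IsAdjointPair B₀ B₀ Dstar D)
    (hK : IsSkewAdjoint B₀ K) (hLC₀ : IsLeviCivita B₀ nabla₀) (hLC : IsLeviCivita B nabla) :
    ricci nabla u u = trace ℝ g₀ (-nabla₀.flip L
      + ((1 / 2 : ℝ) • (D - Dstar - K)) ∘ₗ ((1 / 2 : ℝ) • (D + Dstar + K))
      - ((1 / 2 : ℝ) • (D + Dstar + K)) ∘ₗ D) := by
  refine hg.trace_eq_of_form hB₀ (hg.ricciEndo_apply_v hB₀ hLC u u)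
    (hg.form_ricciEndo_v hLC u u u) fun h f => ?_
  simp only [hg.nabla_u_u hB₀ hLC, map_neg, LinearMap.add_apply, LinearMap.sub_apply,
    LinearMap.neg_apply, flip_apply, hg.nabla_ι_ι hB₀ hsymm₀ hDstar hLC₀ hLC, one_div, smul_add,
    map_add, map_smul, LinearMap.smul_apply, smul_eq_mul, neg_add_rev, coe_comp,
    Function.comp_apply, hg.nabla_ι_u hB₀ hsymm₀ hDstar hK hLC, hg.nabla_u_ι hB₀ hsymm₀ hDstar hLC,
    map_sub, LieAlgebra.ad_apply, hg.lie_u_ι, hg.nabla_v_left hB₀ hLC, smul_zero, add_zero,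
    hg.form_v_ι, mul_zero, neg_zero, hg.form_ι_ι, zero_add, coe_smul, Pi.smul_apply]
  ring

theorem ricci_ι_ι (hg : IsDoubleExtension B₀ D K L B u v ι) (hB₀ : B₀.SeparatingLeft)
    [FiniteDimensional ℝ g₀] [FiniteDimensional ℝ g]
    (hsymm₀ : ∀ e f, B₀ e f = B₀ f e) (hDstar : IsAdjointPair B₀ B₀ Dstar D)
    (hLC₀ : IsLeviCivita B₀ nabla₀) (hLC : IsLeviCivita B nabla) (e f : g₀) :
    ricci nabla (ι e) (ι f) = ricci nabla₀ e f := by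
  refine hg.trace_eq_of_form hB₀ (hg.ricciEndo_apply_v hB₀ hLC _ _)
    (hg.form_ricciEndo_v hLC _ _ u) fun h f' => ?_
  simp [hg.nabla_ι_ι hB₀ hsymm₀ hDstar hLC₀ hLC, hg.lie_ι_ι, hg.nabla_v_left hB₀ hLC,
    hg.nabla_v_right hB₀ hLC, hg.form_ι_ι, hg.form_v_ι]

theorem ricci_u_ι_eq_trace (hg : IsDoubleExtension B₀ D K L B u v ι) (hB₀ : B₀.SeparatingLeft)
    [FiniteDimensional ℝ g₀] [FiniteDimensional ℝ g]
    (hsymm₀ : ∀ e f, B₀ e f = B₀ f e) (hDstar : IsAdjointPair B₀ B₀ Dstar D)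
    (hLC₀ : IsLeviCivita B₀ nabla₀) (hLC : IsLeviCivita B nabla) (f : g₀) :
    ricci nabla u (ι f) = trace ℝ g₀ (nabla₀.flip ((1 / 2 : ℝ) • (D - Dstar - K) f)
      - ((1 / 2 : ℝ) • (D - Dstar - K)) ∘ₗ nabla₀.flip f + nabla₀.flip f ∘ₗ D) := by
  refine hg.trace_eq_of_form hB₀ (hg.ricciEndo_apply_v hB₀ hLC _ _)
    (hg.form_ricciEndo_v hLC _ _ u) fun h f' => ?_
  simp [hg.nabla_u_ι hB₀ hsymm₀ hDstar hLC, hg.nabla_ι_ι hB₀ hsymm₀ hDstar hLC₀ hLC,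
    hg.lie_u_ι, hg.nabla_v_left hB₀ hLC, hg.nabla_v_right hB₀ hLC, hg.form_ι_ι, hg.form_v_ι]

theorem ricci_ι_u_eq_trace (hg : IsDoubleExtension B₀ D K L B u v ι) (hB₀ : B₀.SeparatingLeft)
    [FiniteDimensional ℝ g₀] [FiniteDimensional ℝ g]
    (hsymm₀ : ∀ e f, B₀ e f = B₀ f e) (hDstar : IsAdjointPair B₀ B₀ Dstar D)
    (hK : IsSkewAdjoint B₀ K) (hLC₀ : IsLeviCivita B₀ nabla₀) (hLC : IsLeviCivita B nabla)
    (e : g₀) :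
    ricci nabla (ι e) u = trace ℝ g₀ (-nabla₀.flip ((1 / 2 : ℝ) • (D + Dstar + K) e)
      + nabla₀ e ∘ₗ ((1 / 2 : ℝ) • (D + Dstar + K))
      - ((1 / 2 : ℝ) • (D + Dstar + K)) ∘ₗ (LieAlgebra.ad ℝ g₀ e : g₀ →ₗ[ℝ] g₀)) := by
  refine hg.trace_eq_of_form hB₀ (hg.ricciEndo_apply_v hB₀ hLC _ _)
    (hg.form_ricciEndo_v hLC _ _ u) fun h f => ?_
  simp only [hg.nabla_ι_u hB₀ hsymm₀ hDstar hK hLC, one_div, LinearMap.add_apply, smul_add, map_add,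
    map_smul, neg_add_rev, map_neg, LinearMap.sub_apply, LinearMap.neg_apply, LinearMap.smul_apply,
    flip_apply, hg.nabla_ι_ι hB₀ hsymm₀ hDstar hLC₀ hLC, smul_eq_mul, coe_comp, Function.comp_apply,
    LieAlgebra.ad_apply, hg.lie_ι_ι, hg.nabla_v_left hB₀ hLC, smul_zero, add_zero, map_sub,
    hg.form_v_ι, mul_zero, neg_zero, hg.form_ι_ι, zero_add]
  ring

end IsDoubleExtension

theorem stmt_16_general (g₀ : Type*) [LieRing g₀] [LieAlgebra ℝ g₀] [FiniteDimensional ℝ g₀]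
    (B₀ : g₀ →ₗ[ℝ] g₀ →ₗ[ℝ] ℝ)
    (hsymm₀ : ∀ e f : g₀, B₀ e f = B₀ f e)
    (hnd₀ : ∀ e : g₀, (∀ f : g₀, B₀ e f = 0) → e = 0)
    (nabla₀ : g₀ →ₗ[ℝ] g₀ →ₗ[ℝ] g₀)
    (hLC₀ : IsLeviCivita B₀ nabla₀)
    (D K Dstar : g₀ →ₗ[ℝ] g₀) (L : g₀)
    (hD : ∀ e f : g₀, D ⁅e, f⁆ = ⁅D e, f⁆ + ⁅e, D f⁆)
    (hDstar : ∀ e f : g₀, B₀ (Dstar e) f = B₀ e (D f))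
    (hKskew : ∀ e f : g₀, B₀ (K e) f = -(B₀ e (K f)))
    (g : Type*) [LieRing g] [LieAlgebra ℝ g] [FiniteDimensional ℝ g]
    (u v : g) (ι : g₀ →ₗ[ℝ] g)
    (hspan : ∀ w : g, ∃ (a b : ℝ) (e : g₀), w = a • u + b • v + ι e)
    (hbr1 : ∀ e : g₀, ⁅u, ι e⁆ = ι (D e) + (B₀ L e) • v)
    (hbr2 : ∀ e f : g₀, ⁅ι e, ι f⁆ = ι ⁅e, f⁆ + (B₀ (K e) f) • v)
    (hbr3 : ∀ x : g, ⁅x, v⁆ = 0)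
    (B : g →ₗ[ℝ] g →ₗ[ℝ] ℝ)
    (hB : ∀ (a b a' b' : ℝ) (e e' : g₀),
      B (a • u + b • v + ι e) (a' • u + b' • v + ι e')
        = a * b' + a' * b + B₀ e e')
    (nabla : g →ₗ[ℝ] g →ₗ[ℝ] g)
    (hLC : IsLeviCivita B nabla)
    (Z₀ : g₀)
    (hZ : ∀ f : g₀, B₀ Z₀ f = LinearMap.trace ℝ g₀ (LieAlgebra.ad ℝ g₀ f : g₀ →ₗ[ℝ] g₀))
    (S : g₀ →ₗ[ℝ] g₀ →ₗ[ℝ] g₀)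
    (hS : ∀ e f f' : g₀, B₀ (S e f) f' = B₀ e ⁅f, f'⁆)
    (Δ : g₀)
    (hΔ : ∀ e : g₀, B₀ Δ e
      = -(1/2) * LinearMap.trace ℝ g₀ ((D + Dstar) ∘ₗ (LieAlgebra.ad ℝ g₀ e : g₀ →ₗ[ℝ] g₀))
        + (1/2) * B₀ ((D - K) Z₀) e - (1/4) * LinearMap.trace ℝ g₀ (K ∘ₗ S e))
    (Γ : ℝ)
    (hΓ : Γ = -(1/2) * LinearMap.trace ℝ g₀ (D ∘ₗ D)
        - (1/2) * LinearMap.trace ℝ g₀ (Dstar ∘ₗ D)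
        - (1/4) * LinearMap.trace ℝ g₀ (K ∘ₗ K) + B₀ L Z₀)
    (Ric : g →ₗ[ℝ] g)
    (hRic : ∀ x y : g, B (Ric x) y = ricci nabla x y)
    (hflat : ∀ e f : g₀, ricci nabla₀ e f = 0)
    (hΔ0 : Δ = 0) :
    IsRicciParallel nabla ∧ (Γ ≠ 0 → Ric ≠ 0 ∧ Ric ∘ₗ Ric = 0) := by
  have hg : IsDoubleExtension B₀ D K L B u v ι := ⟨hspan, hbr1, hbr2, hbr3, hB⟩
  have hK : IsSkewAdjoint B₀ K := fun e f => by simp [hKskew]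
  have hΔ' (e : g₀) : B₀ Δ e = 0 := by rw [hΔ0, map_zero, LinearMap.zero_apply]
  have huu : ricci nabla u u = Γ := by
    rw [hg.ricci_u_u_eq_trace hnd₀ hsymm₀ hDstar hK hLC₀ hLC,
      trace_block_u_u hnd₀ hsymm₀ hLC₀ hDstar hK hZ, hΓ]
  have hιι (e f : g₀) : ricci nabla (ι e) (ι f) = 0 := by
    rw [hg.ricci_ι_ι hnd₀ hsymm₀ hDstar hLC₀ hLC, hflat]
  have huι (f : g₀) : ricci nabla u (ι f) = 0 := by
    rw [hg.ricci_u_ι_eq_trace hnd₀ hsymm₀ hDstar hLC₀ hLC,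
      trace_block_u_ι hnd₀ hsymm₀ hLC₀ hD hDstar hK hS hZ, ← hΔ, hΔ']
  have hιu (e : g₀) : ricci nabla (ι e) u = 0 := by
    rw [hg.ricci_ι_u_eq_trace hnd₀ hsymm₀ hDstar hK hLC₀ hLC,
      trace_block_ι_u hnd₀ hsymm₀ hLC₀ hD hDstar hK hS hZ, ← hΔ, hΔ']
  have hric (x y : g) : ricci nabla x y = Γ * B x v * B y v := by
    rw [← huu]
    exact hg.ricci_eq_mul hnd₀ hLC hιι huι hιu x y
  have hRic_eq := eq_smul_of_ricci_eq nabla (hg.separatingLeft hnd₀) (hg.form_comm hsymm₀) hRic hric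
  refine ⟨isRicciParallel_of_ricci_eq nabla hric (hg.form_nabla_v hLC), fun hΓ0 => ⟨?_, ?_⟩⟩
  · intro h0
    have hu := congrArg (B · u) (hRic_eq u)
    simp only [h0, LinearMap.zero_apply, map_zero, map_smul, LinearMap.smul_apply, smul_eq_mul,
      hg.form_u_v, hg.form_v_u, mul_one] at hu
    exact hΓ0 hu.symm
  · ext x
    rw [comp_apply, hRic_eq x, map_smul, hRic_eq v, hg.form_v_v]
    simp

/-- If the base of a double extension is Ricci flat and Δ = 0, the double
extension is Ricci-parallel; if moreover Γ ≠ 0 then Ric ≠ 0 and Ric² = 0. -/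
theorem stmt_16 (g₀ : Type*) [LieRing g₀] [LieAlgebra ℝ g₀] [FiniteDimensional ℝ g₀]
    (B₀ : g₀ →ₗ[ℝ] g₀ →ₗ[ℝ] ℝ)
    (hsymm₀ : ∀ e f : g₀, B₀ e f = B₀ f e)
    (hnd₀ : ∀ e : g₀, (∀ f : g₀, B₀ e f = 0) → e = 0)
    (nabla₀ : g₀ →ₗ[ℝ] g₀ →ₗ[ℝ] g₀)
    (hLC₀ : IsLeviCivita B₀ nabla₀)
    (D K Dstar : g₀ →ₗ[ℝ] g₀) (L : g₀)
    (hD : ∀ e f : g₀, D ⁅e, f⁆ = ⁅D e, f⁆ + ⁅e, D f⁆)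
    (hDstar : ∀ e f : g₀, B₀ (Dstar e) f = B₀ e (D f))
    (hKskew : ∀ e f : g₀, B₀ (K e) f = -(B₀ e (K f)))
    (hJacobi : ∀ e f : g₀, B₀ L ⁅e, f⁆ = B₀ ((K ∘ₗ D + Dstar ∘ₗ K) e) f)
    (g : Type*) [LieRing g] [LieAlgebra ℝ g] [FiniteDimensional ℝ g]
    (u v : g) (ι : g₀ →ₗ[ℝ] g)
    (hspan : ∀ w : g, ∃ (a b : ℝ) (e : g₀), w = a • u + b • v + ι e)
    (hbr1 : ∀ e : g₀, ⁅u, ι e⁆ = ι (D e) + (B₀ L e) • v)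
    (hbr2 : ∀ e f : g₀, ⁅ι e, ι f⁆ = ι ⁅e, f⁆ + (B₀ (K e) f) • v)
    (hbr3 : ∀ x : g, ⁅x, v⁆ = 0)
    (B : g →ₗ[ℝ] g →ₗ[ℝ] ℝ)
    (hB : ∀ (a b a' b' : ℝ) (e e' : g₀),
      B (a • u + b • v + ι e) (a' • u + b' • v + ι e')
        = a * b' + a' * b + B₀ e e')
    (hnd : ∀ w : g, (∀ z : g, B w z = 0) → w = 0)
    (nabla : g →ₗ[ℝ] g →ₗ[ℝ] g)
    (hLC : IsLeviCivita B nabla)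
    (Z₀ : g₀)
    (hZ : ∀ f : g₀, B₀ Z₀ f = LinearMap.trace ℝ g₀ (LieAlgebra.ad ℝ g₀ f : g₀ →ₗ[ℝ] g₀))
    (S : g₀ →ₗ[ℝ] g₀ →ₗ[ℝ] g₀)
    (hS : ∀ e f f' : g₀, B₀ (S e f) f' = B₀ e ⁅f, f'⁆)
    (Δ : g₀)
    (hΔ : ∀ e : g₀, B₀ Δ e
      = -(1/2) * LinearMap.trace ℝ g₀ ((D + Dstar) ∘ₗ (LieAlgebra.ad ℝ g₀ e : g₀ →ₗ[ℝ] g₀))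
        + (1/2) * B₀ ((D - K) Z₀) e - (1/4) * LinearMap.trace ℝ g₀ (K ∘ₗ S e))
    (Γ : ℝ)
    (hΓ : Γ = -(1/2) * LinearMap.trace ℝ g₀ (D ∘ₗ D)
        - (1/2) * LinearMap.trace ℝ g₀ (Dstar ∘ₗ D)
        - (1/4) * LinearMap.trace ℝ g₀ (K ∘ₗ K) + B₀ L Z₀)
    (Ric : g →ₗ[ℝ] g)
    (hRic : ∀ x y : g, B (Ric x) y = ricci nabla x y)
    (Ric₀ : g₀ →ₗ[ℝ] g₀)
    (hRic₀ : ∀ e f : g₀, B₀ (Ric₀ e) f = ricci nabla₀ e f)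
    (hflat : ∀ e f : g₀, ricci nabla₀ e f = 0)
    (hΔ0 : Δ = 0) :
    IsRicciParallel nabla ∧ (Γ ≠ 0 → Ric ≠ 0 ∧ Ric ∘ₗ Ric = 0) :=
  stmt_16_general g₀ B₀ hsymm₀ hnd₀ nabla₀ hLC₀ D K Dstar L hD hDstar hKskew g u v ι hspan hbr1 hbr2
    hbr3 B hB nabla hLC Z₀ hZ S hS Δ hΔ Γ hΓ Ric hRic hflat hΔ0
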